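/- Let L be the free Lie algebra over a field k on x₁,…,x₄ and let 𝔯 be the ideal generated by the four quadratic relators x₁₂, x₁₃, x₂₃, x₂₄ (corresponding to orbit representative (2), whose orthogonal complement is spanned by the x₁₄- and x₃₄-coordinates). For 𝔤 = L/𝔯 one has dim 𝔤₁ = 4, dim 𝔤₂ = 2, and dim 𝔤₃ = 5. -/

import Mathlib

open FreeLieAlgebra

/-- The dimension of the `n`-th graded piece of a Lie algebra `𝔤` generated in
degree 1 (with homogeneous relations), computed as
`dim γ_{n-1}(𝔤)/γ_n(𝔤)` via the lower central series (`γ₀ = 𝔤`). -/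
noncomputable def grDim (k 𝔤 : Type*) [CommRing k] [LieRing 𝔤] [LieAlgebra k 𝔤]
    (n : ℕ) : ℕ :=
  Module.finrank k
    ((LieModule.lowerCentralSeries k 𝔤 𝔤 (n - 1)).toSubmodule ⧸
      Submodule.comap (LieModule.lowerCentralSeries k 𝔤 𝔤 (n - 1)).toSubmodule.subtype
        (LieModule.lowerCentralSeries k 𝔤 𝔤 n).toSubmodule)

/-! ### An 11-dimensional nilpotent model Lie algebra -/

def NModel (k : Type*) := Fin 11 → k

namespace NModel
variable {k : Type*} [Field k]
instance : AddCommGroup (NModel k) := inferInstanceAs (AddCommGroup (Fin 11 → k))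
instance : Module k (NModel k) := inferInstanceAs (Module k (Fin 11 → k))

def br (v w : NModel k) : NModel k := fun i =>
  if i.val = 4 then v 0 * w 3 - v 3 * w 0
  else if i.val = 5 then v 2 * w 3 - v 3 * w 2
  else if i.val = 6 then v 0 * w 4 - w 0 * v 4
  else if i.val = 7 then v 2 * w 4 - w 2 * v 4 + (v 0 * w 5 - w 0 * v 5)
  else if i.val = 8 then v 3 * w 4 - w 3 * v 4
  else if i.val = 9 then v 2 * w 5 - w 2 * v 5
  else if i.val = 10 then v 3 * w 5 - w 3 * v 5
  else 0

lemma add_apply (v w : NModel k) (i : Fin 11) : (v + w) i = v i + w i := rfl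
lemma smul_apply (t : k) (v : NModel k) (i : Fin 11) : (t • v) i = t * v i := rfl
lemma zero_apply (i : Fin 11) : (0 : NModel k) i = 0 := rfl

lemma br0 (v w : NModel k) : br v w 0 = 0 := rfl
lemma br1 (v w : NModel k) : br v w 1 = 0 := rfl
lemma br2 (v w : NModel k) : br v w 2 = 0 := rfl
lemma br3 (v w : NModel k) : br v w 3 = 0 := rfl
lemma br4 (v w : NModel k) : br v w 4 = v 0 * w 3 - v 3 * w 0 := rfl
lemma br5 (v w : NModel k) : br v w 5 = v 2 * w 3 - v 3 * w 2 := rfl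
lemma br6 (v w : NModel k) : br v w 6 = v 0 * w 4 - w 0 * v 4 := rfl
lemma br7 (v w : NModel k) : br v w 7 = v 2 * w 4 - w 2 * v 4 + (v 0 * w 5 - w 0 * v 5) := rfl
lemma br8 (v w : NModel k) : br v w 8 = v 3 * w 4 - w 3 * v 4 := rfl
lemma br9 (v w : NModel k) : br v w 9 = v 2 * w 5 - w 2 * v 5 := rfl
lemma br10 (v w : NModel k) : br v w 10 = v 3 * w 5 - w 3 * v 5 := rfl

omit [Field k] in
lemma ext11 {v w : NModel k} (h0 : v 0 = w 0) (h1 : v 1 = w 1) (h2 : v 2 = w 2)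
    (h3 : v 3 = w 3) (h4 : v 4 = w 4) (h5 : v 5 = w 5) (h6 : v 6 = w 6) (h7 : v 7 = w 7)
    (h8 : v 8 = w 8) (h9 : v 9 = w 9) (h10 : v 10 = w 10) : v = w := by
  funext i
  fin_cases i
  exacts [h0, h1, h2, h3, h4, h5, h6, h7, h8, h9, h10]

set_option maxHeartbeats 2000000 in
instance : LieRing (NModel k) where
  bracket := br
  add_lie x y z := by
    refine ext11 ?_ ?_ ?_ ?_ ?_ ?_ ?_ ?_ ?_ ?_ ?_ <;>
      simp only [br0, br1, br2, br3, br4, br5, br6, br7, br8, br9, br10, add_apply,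
        zero_apply] <;> ring
  lie_add x y z := by
    refine ext11 ?_ ?_ ?_ ?_ ?_ ?_ ?_ ?_ ?_ ?_ ?_ <;>
      simp only [br0, br1, br2, br3, br4, br5, br6, br7, br8, br9, br10, add_apply,
        zero_apply] <;> ring
  lie_self x := by
    refine ext11 ?_ ?_ ?_ ?_ ?_ ?_ ?_ ?_ ?_ ?_ ?_ <;>
      simp only [br0, br1, br2, br3, br4, br5, br6, br7, br8, br9, br10, add_apply,
        zero_apply] <;> ring
  leibniz_lie x y z := by
    refine ext11 ?_ ?_ ?_ ?_ ?_ ?_ ?_ ?_ ?_ ?_ ?_ <;>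
      simp only [br0, br1, br2, br3, br4, br5, br6, br7, br8, br9, br10, add_apply,
        zero_apply] <;> ring

lemma lie_def' (v w : NModel k) : ⁅v, w⁆ = br v w := rfl

set_option maxHeartbeats 1000000 in
instance : LieAlgebra k (NModel k) where
  lie_smul t x y := by
    refine ext11 ?_ ?_ ?_ ?_ ?_ ?_ ?_ ?_ ?_ ?_ ?_ <;>
      simp only [lie_def', br0, br1, br2, br3, br4, br5, br6, br7, br8, br9, br10, smul_apply,
        zero_apply] <;> ring

lemma lie_def (v w : NModel k) : ⁅v, w⁆ = br v w := rfl

/-- standard basis vectors -/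
def sv (j : Fin 11) : NModel k := fun i => if i = j then 1 else 0

set_option maxHeartbeats 1000000 in
lemma br_e03 : ⁅(sv 0 : NModel k), (sv 3 : NModel k)⁆ = sv 4 := by
  refine ext11 ?_ ?_ ?_ ?_ ?_ ?_ ?_ ?_ ?_ ?_ ?_ <;> simp [lie_def, br0, br1, br2, br3, br4, br5, br6, br7, br8, br9, br10, sv, zero_apply]

set_option maxHeartbeats 1000000 in
lemma br_e23 : ⁅(sv 2 : NModel k), (sv 3 : NModel k)⁆ = sv 5 := by
  refine ext11 ?_ ?_ ?_ ?_ ?_ ?_ ?_ ?_ ?_ ?_ ?_ <;> simp [lie_def, br0, br1, br2, br3, br4, br5, br6, br7, br8, br9, br10, sv, zero_apply]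

set_option maxHeartbeats 1000000 in
lemma br_e04 : ⁅(sv 0 : NModel k), (sv 4 : NModel k)⁆ = sv 6 := by
  refine ext11 ?_ ?_ ?_ ?_ ?_ ?_ ?_ ?_ ?_ ?_ ?_ <;> simp [lie_def, br0, br1, br2, br3, br4, br5, br6, br7, br8, br9, br10, sv, zero_apply]

set_option maxHeartbeats 1000000 in
lemma br_e24 : ⁅(sv 2 : NModel k), (sv 4 : NModel k)⁆ = sv 7 := by
  refine ext11 ?_ ?_ ?_ ?_ ?_ ?_ ?_ ?_ ?_ ?_ ?_ <;> simp [lie_def, br0, br1, br2, br3, br4, br5, br6, br7, br8, br9, br10, sv, zero_apply]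

set_option maxHeartbeats 1000000 in
lemma br_e34 : ⁅(sv 3 : NModel k), (sv 4 : NModel k)⁆ = sv 8 := by
  refine ext11 ?_ ?_ ?_ ?_ ?_ ?_ ?_ ?_ ?_ ?_ ?_ <;> simp [lie_def, br0, br1, br2, br3, br4, br5, br6, br7, br8, br9, br10, sv, zero_apply]

set_option maxHeartbeats 1000000 in
lemma br_e25 : ⁅(sv 2 : NModel k), (sv 5 : NModel k)⁆ = sv 9 := by
  refine ext11 ?_ ?_ ?_ ?_ ?_ ?_ ?_ ?_ ?_ ?_ ?_ <;> simp [lie_def, br0, br1, br2, br3, br4, br5, br6, br7, br8, br9, br10, sv, zero_apply]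

set_option maxHeartbeats 1000000 in
lemma br_e35 : ⁅(sv 3 : NModel k), (sv 5 : NModel k)⁆ = sv 10 := by
  refine ext11 ?_ ?_ ?_ ?_ ?_ ?_ ?_ ?_ ?_ ?_ ?_ <;> simp [lie_def, br0, br1, br2, br3, br4, br5, br6, br7, br8, br9, br10, sv, zero_apply]

set_option maxHeartbeats 1000000 in
lemma br_e01 : ⁅(sv 0 : NModel k), (sv 1 : NModel k)⁆ = 0 := by
  refine ext11 ?_ ?_ ?_ ?_ ?_ ?_ ?_ ?_ ?_ ?_ ?_ <;> simp [lie_def, br0, br1, br2, br3, br4, br5, br6, br7, br8, br9, br10, sv, zero_apply]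

set_option maxHeartbeats 1000000 in
lemma br_e02 : ⁅(sv 0 : NModel k), (sv 2 : NModel k)⁆ = 0 := by
  refine ext11 ?_ ?_ ?_ ?_ ?_ ?_ ?_ ?_ ?_ ?_ ?_ <;> simp [lie_def, br0, br1, br2, br3, br4, br5, br6, br7, br8, br9, br10, sv, zero_apply]

set_option maxHeartbeats 1000000 in
lemma br_e12 : ⁅(sv 1 : NModel k), (sv 2 : NModel k)⁆ = 0 := by
  refine ext11 ?_ ?_ ?_ ?_ ?_ ?_ ?_ ?_ ?_ ?_ ?_ <;> simp [lie_def, br0, br1, br2, br3, br4, br5, br6, br7, br8, br9, br10, sv, zero_apply]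

set_option maxHeartbeats 1000000 in
lemma br_e13 : ⁅(sv 1 : NModel k), (sv 3 : NModel k)⁆ = 0 := by
  refine ext11 ?_ ?_ ?_ ?_ ?_ ?_ ?_ ?_ ?_ ?_ ?_ <;> simp [lie_def, br0, br1, br2, br3, br4, br5, br6, br7, br8, br9, br10, sv, zero_apply]

/-- membership conditions cutting out the "degree ≥ 2" part -/
def K1 : Submodule k (NModel k) where
  carrier := {v | v 0 = 0 ∧ v 1 = 0 ∧ v 2 = 0 ∧ v 3 = 0}
  add_mem' := by
    rintro a b ⟨ha0, ha1, ha2, ha3⟩ ⟨hb0, hb1, hb2, hb3⟩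
    refine ⟨?_, ?_, ?_, ?_⟩ <;> simp [add_apply, ha0, ha1, ha2, ha3, hb0, hb1, hb2, hb3]
  zero_mem' := ⟨rfl, rfl, rfl, rfl⟩
  smul_mem' := by
    rintro t a ⟨ha0, ha1, ha2, ha3⟩
    refine ⟨?_, ?_, ?_, ?_⟩ <;> simp [smul_apply, ha0, ha1, ha2, ha3]

/-- membership conditions cutting out the "degree ≥ 3" part -/
def K2 : Submodule k (NModel k) where
  carrier := {v | v 0 = 0 ∧ v 1 = 0 ∧ v 2 = 0 ∧ v 3 = 0 ∧ v 4 = 0 ∧ v 5 = 0}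
  add_mem' := by
    rintro a b ⟨ha0, ha1, ha2, ha3, ha4, ha5⟩ ⟨hb0, hb1, hb2, hb3, hb4, hb5⟩
    refine ⟨?_, ?_, ?_, ?_, ?_, ?_⟩ <;>
      simp [add_apply, ha0, ha1, ha2, ha3, ha4, ha5, hb0, hb1, hb2, hb3, hb4, hb5]
  zero_mem' := ⟨rfl, rfl, rfl, rfl, rfl, rfl⟩
  smul_mem' := by
    rintro t a ⟨ha0, ha1, ha2, ha3, ha4, ha5⟩
    refine ⟨?_, ?_, ?_, ?_, ?_, ?_⟩ <;> simp [smul_apply, ha0, ha1, ha2, ha3, ha4, ha5]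

lemma br_mem_K1 (v w : NModel k) : ⁅v, w⁆ ∈ (K1 : Submodule k (NModel k)) :=
  ⟨br0 v w, br1 v w, br2 v w, br3 v w⟩

lemma br_mem_K2 (v : NModel k) {w : NModel k} (hw : w ∈ (K1 : Submodule k (NModel k))) :
    ⁅v, w⁆ ∈ (K2 : Submodule k (NModel k)) := by
  obtain ⟨h0, h1, h2, h3⟩ := hw
  exact ⟨br0 v w, br1 v w, br2 v w, br3 v w,
    by rw [lie_def, br4, h0, h3, mul_zero, mul_zero, sub_zero],
    by rw [lie_def, br5, h2, h3, mul_zero, mul_zero, sub_zero]⟩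

lemma br_eq_zero_K2 (v : NModel k) {w : NModel k} (hw : w ∈ (K2 : Submodule k (NModel k))) :
    ⁅v, w⁆ = 0 := by
  obtain ⟨h0, h1, h2, h3, h4, h5⟩ := hw
  refine ext11 ?_ ?_ ?_ ?_ ?_ ?_ ?_ ?_ ?_ ?_ ?_ <;>
    simp [lie_def, br0, br1, br2, br3, br4, br5, br6, br7, br8, br9, br10, zero_apply,
      h0, h1, h2, h3, h4, h5]

/-- lower central series bounds in the model -/
lemma lcs1_le_K1 :
    (LieModule.lowerCentralSeries k (NModel k) (NModel k) 1).toSubmodule ≤ K1 := by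
  rw [show (1 : ℕ) = 0 + 1 from rfl, LieModule.lowerCentralSeries_succ,
    LieSubmodule.lieIdeal_oper_eq_linear_span]
  rw [Submodule.span_le]
  rintro u ⟨x, n, rfl⟩
  exact br_mem_K1 _ _

lemma lcs2_le_K2 :
    (LieModule.lowerCentralSeries k (NModel k) (NModel k) 2).toSubmodule ≤ K2 := by
  rw [show (2 : ℕ) = 1 + 1 from rfl, LieModule.lowerCentralSeries_succ,
    LieSubmodule.lieIdeal_oper_eq_linear_span]
  rw [Submodule.span_le]
  rintro u ⟨x, n, rfl⟩
  exact br_mem_K2 _ (lcs1_le_K1 n.2)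

lemma lcs3_eq_zero {v : NModel k}
    (hv : v ∈ LieModule.lowerCentralSeries k (NModel k) (NModel k) 3) : v = 0 := by
  have h : (LieModule.lowerCentralSeries k (NModel k) (NModel k) 3).toSubmodule ≤ ⊥ := by
    rw [show (3 : ℕ) = 2 + 1 from rfl, LieModule.lowerCentralSeries_succ,
      LieSubmodule.lieIdeal_oper_eq_linear_span]
    rw [Submodule.span_le]
    rintro u ⟨x, n, rfl⟩
    simp only [SetLike.mem_coe, Submodule.mem_bot]
    exact br_eq_zero_K2 _ (lcs2_le_K2 n.2)
  simpa using h hv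

end NModel

/-! ### The presented Lie algebra and its graded dimensions -/

namespace OrbitTwo

noncomputable section

open NModel LieSubmodule

variable (k : Type*) [Field k]

abbrev FL := FreeLieAlgebra k (Fin 4)

def rId : LieIdeal k (FL k) := LieSubmodule.lieSpan k (FL k)
  {⁅of k (0 : Fin 4), of k (1 : Fin 4)⁆, ⁅of k (0 : Fin 4), of k (2 : Fin 4)⁆, ⁅of k (1 : Fin 4), of k (2 : Fin 4)⁆, ⁅of k (1 : Fin 4), of k (3 : Fin 4)⁆}

abbrev GQ := FL k ⧸ rId k

/-- images of generators under the map to the model -/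
def φgen (i : Fin 4) : NModel k := sv ⟨i.val, by omega⟩

lemma φgen0 : φgen k 0 = sv 0 := rfl
lemma φgen1 : φgen k 1 = sv 1 := rfl
lemma φgen2 : φgen k 2 = sv 2 := rfl
lemma φgen3 : φgen k 3 = sv 3 := rfl

noncomputable def φ : FL k →ₗ⁅k⁆ NModel k := FreeLieAlgebra.lift k (φgen k)

lemma φ_of (i : Fin 4) : φ k (of k i) = φgen k i := by
  simp [φ, FreeLieAlgebra.lift_of_apply]

lemma rId_le_ker : rId k ≤ (φ k).ker := by
  rw [rId, LieSubmodule.lieSpan_le]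
  rintro u hu
  simp only [Set.mem_insert_iff, Set.mem_singleton_iff] at hu
  rcases hu with rfl | rfl | rfl | rfl <;>
    rw [SetLike.mem_coe, LieHom.mem_ker, LieHom.map_lie] <;>
    rw [φ_of, φ_of]
  · rw [φgen0, φgen1, br_e01]
  · rw [φgen0, φgen2, br_e02]
  · rw [φgen1, φgen2, br_e12]
  · rw [φgen1, φgen3, br_e13]

def mkG : FL k →ₗ⁅k⁆ GQ k :=
  { (rId k).toSubmodule.mkQ with
    map_lie' := fun {_ _} => rfl }

lemma mkG_apply (y : FL k) : mkG k y = Submodule.Quotient.mk y := rfl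

lemma mkG_surjective : Function.Surjective (mkG k) :=
  Submodule.Quotient.mk_surjective _

noncomputable def φb : GQ k →ₗ⁅k⁆ NModel k :=
  { Submodule.liftQ (rId k).toSubmodule (φ k).toLinearMap
      (by rw [← LieHom.ker_toSubmodule]
          exact (LieSubmodule.toSubmodule_le_toSubmodule _ _).mpr (rId_le_ker k)) with
    map_lie' := by
      intro x y
      obtain ⟨a, rfl⟩ := mkG_surjective k x
      obtain ⟨b, rfl⟩ := mkG_surjective k y
      show Submodule.liftQ (rId k).toSubmodule (φ k).toLinearMap _ ⁅mkG k a, mkG k b⁆ =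
        ⁅Submodule.liftQ (rId k).toSubmodule (φ k).toLinearMap _ (mkG k a),
         Submodule.liftQ (rId k).toSubmodule (φ k).toLinearMap _ (mkG k b)⁆
      rw [← LieHom.map_lie (mkG k)]
      rw [mkG_apply, mkG_apply, mkG_apply, Submodule.liftQ_apply, Submodule.liftQ_apply,
        Submodule.liftQ_apply]
      exact (φ k).map_lie a b }

lemma φb_mk (y : FL k) : φb k (mkG k y) = φ k y := rfl

/-- generators of the quotient -/
def XG (i : Fin 4) : GQ k := mkG k (of k i)

lemma φb_X (i : Fin 4) : φb k (XG k i) = φgen k i := by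
  rw [XG, φb_mk, φ_of]

def PG : GQ k := ⁅XG k 0, XG k 3⁆
def QG : GQ k := ⁅XG k 2, XG k 3⁆
def G1 : GQ k := ⁅XG k 0, PG k⁆
def G2 : GQ k := ⁅XG k 2, PG k⁆
def G3 : GQ k := ⁅XG k 3, PG k⁆
def G4 : GQ k := ⁅XG k 2, QG k⁆
def G5 : GQ k := ⁅XG k 3, QG k⁆

lemma φb_P : φb k (PG k) = sv 4 := by
  rw [PG, LieHom.map_lie, φb_X, φb_X, φgen0, φgen3, br_e03]
lemma φb_Q : φb k (QG k) = sv 5 := by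
  rw [QG, LieHom.map_lie, φb_X, φb_X, φgen2, φgen3, br_e23]
lemma φb_G1 : φb k (G1 k) = sv 6 := by
  rw [G1, LieHom.map_lie, φb_X, φb_P, φgen0, br_e04]
lemma φb_G2 : φb k (G2 k) = sv 7 := by
  rw [G2, LieHom.map_lie, φb_X, φb_P, φgen2, br_e24]
lemma φb_G3 : φb k (G3 k) = sv 8 := by
  rw [G3, LieHom.map_lie, φb_X, φb_P, φgen3, br_e34]
lemma φb_G4 : φb k (G4 k) = sv 9 := by
  rw [G4, LieHom.map_lie, φb_X, φb_Q, φgen2, br_e25]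
lemma φb_G5 : φb k (G5 k) = sv 10 := by
  rw [G5, LieHom.map_lie, φb_X, φb_Q, φgen3, br_e35]

/-- the relators vanish in the quotient -/
lemma rel_mem (u : FL k)
    (hu : u ∈ ({⁅of k (0 : Fin 4), of k (1 : Fin 4)⁆, ⁅of k (0 : Fin 4), of k (2 : Fin 4)⁆, ⁅of k (1 : Fin 4), of k (2 : Fin 4)⁆, ⁅of k (1 : Fin 4), of k (3 : Fin 4)⁆} :
      Set (FL k))) : mkG k u = 0 := by
  rw [mkG_apply]
  exact (LieSubmodule.Quotient.mk_eq_zero').mpr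
    (show u ∈ rId k from LieSubmodule.subset_lieSpan hu)

lemma rel01 : ⁅XG k 0, XG k 1⁆ = 0 := by
  rw [XG, XG, ← LieHom.map_lie]; exact rel_mem k _ (by simp)
lemma rel02 : ⁅XG k 0, XG k 2⁆ = 0 := by
  rw [XG, XG, ← LieHom.map_lie]; exact rel_mem k _ (by simp)
lemma rel12 : ⁅XG k 1, XG k 2⁆ = 0 := by
  rw [XG, XG, ← LieHom.map_lie]; exact rel_mem k _ (by simp)
lemma rel13 : ⁅XG k 1, XG k 3⁆ = 0 := by
  rw [XG, XG, ← LieHom.map_lie]; exact rel_mem k _ (by simp)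

lemma rel1P : ⁅XG k 1, PG k⁆ = 0 := by
  have h := leibniz_lie (XG k 1) (XG k 0) (XG k 3)
  have h10 : ⁅XG k 1, XG k 0⁆ = 0 := by rw [← lie_skew, rel01, neg_zero]
  rw [h10, rel13, zero_lie, lie_zero, add_zero] at h
  rw [PG, h]

lemma rel1Q : ⁅XG k 1, QG k⁆ = 0 := by
  have h := leibniz_lie (XG k 1) (XG k 2) (XG k 3)
  have h12 : ⁅XG k 1, XG k 2⁆ = 0 := rel12 k
  rw [h12, rel13, zero_lie, lie_zero, add_zero] at h
  rw [QG, h]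

lemma rel0Q : ⁅XG k 0, QG k⁆ = G2 k := by
  have h := leibniz_lie (XG k 0) (XG k 2) (XG k 3)
  rw [rel02, zero_lie, zero_add] at h
  rw [QG, h, G2, PG]

/-! ### lower central series helpers in the quotient -/

abbrev γG (n : ℕ) : LieIdeal k (GQ k) := LieModule.lowerCentralSeries k (GQ k) (GQ k) n

lemma γ_succ (n : ℕ) : γG k (n + 1) = ⁅(⊤ : LieIdeal k (GQ k)), γG k n⁆ :=
  LieModule.lowerCentralSeries_succ k (GQ k) (GQ k) n

lemma γ_zero : γG k 0 = ⊤ := LieModule.lowerCentralSeries_zero k (GQ k) (GQ k)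

lemma mem_γ1 (a b : GQ k) : ⁅a, b⁆ ∈ γG k 1 := by
  rw [show (1 : ℕ) = 0 + 1 from rfl, γ_succ k 0, γ_zero k]
  exact LieSubmodule.lie_mem_lie (LieSubmodule.mem_top a) (LieSubmodule.mem_top b)

lemma mem_γsucc {n : ℕ} (a : GQ k) {b : GQ k} (hb : b ∈ γG k n) : ⁅a, b⁆ ∈ γG k (n + 1) := by
  rw [γ_succ k n]
  exact LieSubmodule.lie_mem_lie (LieSubmodule.mem_top a) hb

lemma γ_antitone {m n : ℕ} (h : m ≤ n) : γG k n ≤ γG k m :=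
  LieModule.antitone_lowerCentralSeries k (GQ k) (GQ k) h

/-! ### spanning sets -/

def XSet : Set (GQ k) := {XG k 0, XG k 1, XG k 2, XG k 3}

abbrev sX : Submodule k (GQ k) := Submodule.span k (XSet k)
abbrev sPQ : Submodule k (GQ k) := Submodule.span k ({PG k, QG k} : Set (GQ k))
abbrev sG5 : Submodule k (GQ k) :=
  Submodule.span k ({G1 k, G2 k, G3 k, G4 k, G5 k} : Set (GQ k))

lemma X_mem_sX (i : Fin 4) : XG k i ∈ sX k := by
  fin_cases i <;> exact Submodule.subset_span (by simp [XSet])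

/-- Stage-1 spanning: every element lies in `span X + γ₁`. -/
lemma T1 (z : GQ k) : z ∈ sX k ⊔ (γG k 1).toSubmodule := by
  let S : LieSubalgebra k (GQ k) :=
    { sX k ⊔ (γG k 1).toSubmodule with
      lie_mem' := fun {a b} _ _ =>
        (le_sup_right : (γG k 1).toSubmodule ≤ sX k ⊔ (γG k 1).toSubmodule)
          ((LieSubmodule.mem_toSubmodule _).mpr (mem_γ1 k a b)) }
  have hX : ∀ i : Fin 4, XG k i ∈ S := fun i => Submodule.mem_sup_left (X_mem_sX k i)
  obtain ⟨y, rfl⟩ := mkG_surjective k z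
  have h : (LieSubalgebra.incl S).comp
      (FreeLieAlgebra.lift k (fun i => (⟨XG k i, hX i⟩ : S))) = mkG k := by
    apply FreeLieAlgebra.hom_ext
    intro i
    simp only [LieHom.comp_apply, FreeLieAlgebra.lift_of_apply]
    rfl
  have h2 := DFunLike.congr_fun h y
  rw [← h2]
  exact (FreeLieAlgebra.lift k (fun i => (⟨XG k i, hX i⟩ : S)) y).2

lemma neg_mem_span {s : Set (GQ k)} {x y : GQ k} (h : ⁅x, y⁆ ∈ Submodule.span k s) :
    ⁅y, x⁆ ∈ Submodule.span k s := by
  rw [← lie_skew]; exact neg_mem h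

lemma brXX {a b : GQ k} (ha : a ∈ XSet k) (hb : b ∈ XSet k) : ⁅a, b⁆ ∈ sPQ k := by
  have m03 : ⁅XG k 0, XG k 3⁆ ∈ sPQ k := Submodule.subset_span (Set.mem_insert _ _)
  have m23 : ⁅XG k 2, XG k 3⁆ ∈ sPQ k :=
    Submodule.subset_span (Set.mem_insert_iff.mpr (Or.inr rfl))
  have z01 : ⁅XG k 0, XG k 1⁆ ∈ sPQ k := by rw [rel01 k]; exact zero_mem _
  have z02 : ⁅XG k 0, XG k 2⁆ ∈ sPQ k := by rw [rel02 k]; exact zero_mem _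
  have z12 : ⁅XG k 1, XG k 2⁆ ∈ sPQ k := by rw [rel12 k]; exact zero_mem _
  have z13 : ⁅XG k 1, XG k 3⁆ ∈ sPQ k := by rw [rel13 k]; exact zero_mem _
  have dg : ∀ x : GQ k, ⁅x, x⁆ ∈ sPQ k := fun x => by rw [lie_self]; exact zero_mem _
  simp only [XSet, Set.mem_insert_iff, Set.mem_singleton_iff] at ha hb
  rcases ha with rfl | rfl | rfl | rfl <;> rcases hb with rfl | rfl | rfl | rfl
  exacts [dg _, z01, z02, m03,
    neg_mem_span k z01, dg _, z12, z13,
    neg_mem_span k z02, neg_mem_span k z12, dg _, m23,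
    neg_mem_span k m03, neg_mem_span k z13, neg_mem_span k m23, dg _]

lemma key12 {a b : GQ k} (ha : a ∈ sX k) (hb : b ∈ sX k) : ⁅a, b⁆ ∈ sPQ k := by
  induction ha, hb using Submodule.span_induction₂ with
  | mem_mem x y hx hy => exact brXX k hx hy
  | zero_left y hy => rw [zero_lie]; exact zero_mem _
  | zero_right x hx => rw [lie_zero]; exact zero_mem _
  | add_left x y z hx hy hz h1 h2 => rw [add_lie]; exact add_mem h1 h2
  | add_right x y z hx hy hz h1 h2 => rw [lie_add]; exact add_mem h1 h2
  | smul_left r x y hx hy h => rw [smul_lie]; exact Submodule.smul_mem _ _ h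
  | smul_right r x y hx hy h => rw [lie_smul]; exact Submodule.smul_mem _ _ h

/-- Stage-2 spanning. -/
lemma T2 : (γG k 1).toSubmodule ≤ sPQ k ⊔ (γG k 2).toSubmodule := by
  rw [show (1 : ℕ) = 0 + 1 from rfl, γ_succ k 0, γ_zero k,
    LieSubmodule.lieIdeal_oper_eq_linear_span, Submodule.span_le]
  rintro u ⟨⟨z, -⟩, ⟨w, -⟩, rfl⟩
  obtain ⟨a, ha, c, hc, rfl⟩ := Submodule.mem_sup.mp (T1 k z)
  obtain ⟨b, hb, d, hd, rfl⟩ := Submodule.mem_sup.mp (T1 k w)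
  have hc' : c ∈ γG k 1 := (LieSubmodule.mem_toSubmodule _).mp hc
  have hd' : d ∈ γG k 1 := (LieSubmodule.mem_toSubmodule _).mp hd
  have g2 : ∀ {x y : GQ k}, y ∈ γG k 1 → ⁅x, y⁆ ∈ sPQ k ⊔ (γG k 2).toSubmodule := by
    intro x y hy
    exact Submodule.mem_sup_right ((LieSubmodule.mem_toSubmodule _).mpr (mem_γsucc k x hy))
  simp only [SetLike.mem_coe]
  rw [add_lie, lie_add, lie_add]
  refine add_mem (add_mem ?_ ?_) (add_mem ?_ ?_)
  · exact Submodule.mem_sup_left (key12 k ha hb)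
  · exact g2 hd'
  · rw [← lie_skew]; exact neg_mem (g2 hc')
  · exact g2 hd'

lemma brXPQ {a s : GQ k} (ha : a ∈ XSet k) (hs : s ∈ ({PG k, QG k} : Set (GQ k))) :
    ⁅a, s⁆ ∈ sG5 k := by
  have mG1 : G1 k ∈ sG5 k := Submodule.subset_span (by simp)
  have mG2 : G2 k ∈ sG5 k := Submodule.subset_span (by simp)
  have mG3 : G3 k ∈ sG5 k := Submodule.subset_span (by simp)
  have mG4 : G4 k ∈ sG5 k := Submodule.subset_span (by simp)
  have mG5 : G5 k ∈ sG5 k := Submodule.subset_span (by simp)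
  simp only [XSet, Set.mem_insert_iff, Set.mem_singleton_iff] at ha hs
  rcases ha with rfl | rfl | rfl | rfl <;> rcases hs with rfl | rfl
  · exact mG1
  · rw [rel0Q k]; exact mG2
  · rw [rel1P k]; exact zero_mem _
  · rw [rel1Q k]; exact zero_mem _
  · exact mG2
  · exact mG4
  · exact mG3
  · exact mG5

lemma key23' {s : GQ k} (hs : s ∈ ({PG k, QG k} : Set (GQ k))) {a : GQ k} (ha : a ∈ sX k) :
    ⁅a, s⁆ ∈ sG5 k := by
  induction ha using Submodule.span_induction with
  | mem x hx => exact brXPQ k hx hs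
  | zero => rw [zero_lie]; exact zero_mem _
  | add x y hx hy ihx ihy => rw [add_lie]; exact add_mem ihx ihy
  | smul t x hx ih => rw [smul_lie]; exact Submodule.smul_mem _ _ ih

lemma key23 {a s : GQ k} (ha : a ∈ sX k) (hs : s ∈ sPQ k) : ⁅a, s⁆ ∈ sG5 k := by
  induction hs using Submodule.span_induction with
  | mem y hy => exact key23' k hy ha
  | zero => rw [lie_zero]; exact zero_mem _
  | add x y hx hy ihx ihy => rw [lie_add]; exact add_mem ihx ihy
  | smul t x hx ih => rw [lie_smul]; exact Submodule.smul_mem _ _ ih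

lemma γ1_br {d : GQ k} (hd : d ∈ γG k 1) (y z : GQ k) : ⁅d, ⁅y, z⁆⁆ ∈ γG k 3 := by
  have h1 : ⁅d, y⁆ ∈ γG k 2 := by
    rw [← lie_skew]; exact neg_mem (mem_γsucc k y hd)
  have h2 : ⁅d, z⁆ ∈ γG k 2 := by
    rw [← lie_skew]; exact neg_mem (mem_γsucc k z hd)
  rw [leibniz_lie]
  refine add_mem ?_ (mem_γsucc k y h2)
  rw [← lie_skew]
  exact neg_mem (mem_γsucc k z h1)

lemma key13 {d s : GQ k} (hd : d ∈ γG k 1) (hs : s ∈ sPQ k) : ⁅d, s⁆ ∈ γG k 3 := by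
  induction hs using Submodule.span_induction with
  | mem x hx =>
      simp only [Set.mem_insert_iff, Set.mem_singleton_iff] at hx
      rcases hx with rfl | rfl
      · exact γ1_br k hd (XG k 0) (XG k 3)
      · exact γ1_br k hd (XG k 2) (XG k 3)
  | zero => rw [lie_zero]; exact zero_mem _
  | add x y hx hy ihx ihy => rw [lie_add]; exact add_mem ihx ihy
  | smul t x hx ih => rw [lie_smul]; exact Submodule.smul_mem _ _ ih

/-- Stage-3 spanning. -/
lemma T3 : (γG k 2).toSubmodule ≤ sG5 k ⊔ (γG k 3).toSubmodule := by
  rw [show (2 : ℕ) = 1 + 1 from rfl, γ_succ k 1,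
    LieSubmodule.lieIdeal_oper_eq_linear_span, Submodule.span_le]
  rintro u ⟨⟨z, -⟩, ⟨w, hw⟩, rfl⟩
  obtain ⟨s, hs, c, hc, hw'⟩ := Submodule.mem_sup.mp (T2 k ((LieSubmodule.mem_toSubmodule _).mpr hw))
  obtain ⟨a, ha, d, hd, hz⟩ := Submodule.mem_sup.mp (T1 k z)
  have hc' : c ∈ γG k 2 := (LieSubmodule.mem_toSubmodule _).mp hc
  have hd' : d ∈ γG k 1 := (LieSubmodule.mem_toSubmodule _).mp hd
  simp only [SetLike.mem_coe]
  rw [← hw', ← hz, lie_add, add_lie]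
  refine add_mem (add_mem ?_ ?_) ?_
  · exact Submodule.mem_sup_left (key23 k ha hs)
  · exact Submodule.mem_sup_right ((LieSubmodule.mem_toSubmodule _).mpr (key13 k hd' hs))
  · exact Submodule.mem_sup_right
      ((LieSubmodule.mem_toSubmodule _).mpr (mem_γsucc k _ hc'))

/-! ### coordinate projections of the model -/

def prj (d : ℕ) (emb : Fin d → Fin 11) : NModel k →ₗ[k] (Fin d → k) where
  toFun v j := v (emb j)
  map_add' _ _ := rfl
  map_smul' _ _ := rfl

def emb4 : Fin 4 → Fin 11 := fun j => ⟨j.1, by omega⟩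
def emb2 : Fin 2 → Fin 11 := fun j => ⟨j.1 + 4, by omega⟩
def emb5 : Fin 5 → Fin 11 := fun j => ⟨j.1 + 6, by omega⟩

def f1 : GQ k →ₗ[k] (Fin 4 → k) := (prj k 4 (emb4)).comp (φb k).toLinearMap
def f2 : GQ k →ₗ[k] (Fin 2 → k) := (prj k 2 (emb2)).comp (φb k).toLinearMap
def f3 : GQ k →ₗ[k] (Fin 5 → k) := (prj k 5 (emb5)).comp (φb k).toLinearMap

lemma f1_apply (y : GQ k) (jj : Fin 4) : f1 k y jj = (φb k y) (emb4 jj) := rfl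
lemma f2_apply (y : GQ k) (jj : Fin 2) : f2 k y jj = (φb k y) (emb2 jj) := rfl
lemma f3_apply (y : GQ k) (jj : Fin 5) : f3 k y jj = (φb k y) (emb5 jj) := rfl

lemma φb_lcs {n : ℕ} {x : GQ k} (hx : x ∈ γG k n) :
    φb k x ∈ LieModule.lowerCentralSeries k (NModel k) (NModel k) n :=
  LieIdeal.map_lowerCentralSeries_le n (LieIdeal.mem_map hx)

/-! ### the three graded dimensions -/

/-- the general dimension-counting lemma -/
lemma dim_eq {K : Type*} [Field K] {G : Type*} [LieRing G] [LieAlgebra K G]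
    (γa γb : LieSubmodule K G G) (d : ℕ) (v : Fin d → G)
    (hv : ∀ j, v j ∈ γa)
    (hT : γa.toSubmodule ≤ Submodule.span K (Set.range v) ⊔ γb.toSubmodule)
    (f : G →ₗ[K] (Fin d → K)) (hfb : ∀ x ∈ γb.toSubmodule, f x = 0)
    (hfv : ∀ j, f (v j) = Pi.single j 1) :
    Module.finrank K (γa.toSubmodule ⧸
      Submodule.comap γa.toSubmodule.subtype γb.toSubmodule) = d := by
  set A := γa.toSubmodule with hA
  set B := Submodule.comap A.subtype γb.toSubmodule with hB
  let w : Fin d → (A ⧸ B) := fun j => Submodule.Quotient.mk ⟨v j, hv j⟩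
  have hspan : Submodule.span K (Set.range w) = ⊤ := by
    rw [eq_top_iff]
    rintro q -
    obtain ⟨⟨a, ha⟩, rfl⟩ := Submodule.Quotient.mk_surjective B q
    obtain ⟨b, hb, c, hc, hbc⟩ := Submodule.mem_sup.mp (hT ha)
    have hbA : b ∈ A := Submodule.span_le.mpr (by rintro u ⟨j, rfl⟩; exact hv j) hb
    have heq : (Submodule.Quotient.mk (⟨a, ha⟩ : A) : A ⧸ B) =
        Submodule.Quotient.mk ⟨b, hbA⟩ := by
      rw [Submodule.Quotient.eq]
      have hab : a - b = c := by rw [← hbc]; abel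
      rw [hB, Submodule.mem_comap]
      show a - b ∈ γb.toSubmodule
      rw [hab]; exact hc
    rw [heq]
    have hspanA : Submodule.span K (Set.range v) ≤ A :=
      Submodule.span_le.mpr (by rintro u ⟨j, rfl⟩; exact hv j)
    refine Submodule.span_induction
      (p := fun x hx => ∀ (h : x ∈ A),
        (Submodule.Quotient.mk (⟨x, h⟩ : A) : A ⧸ B) ∈ Submodule.span K (Set.range w))
      ?_ ?_ ?_ ?_ hb hbA
    · rintro u ⟨j, rfl⟩ h
      exact Submodule.subset_span ⟨j, rfl⟩
    · intro h
      have : (⟨0, h⟩ : A) = 0 := rfl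
      rw [this, Submodule.Quotient.mk_zero]
      exact zero_mem _
    · intro x y hx hy ihx ihy h
      have : (⟨x + y, h⟩ : A) = ⟨x, hspanA hx⟩ + ⟨y, hspanA hy⟩ := rfl
      rw [this, Submodule.Quotient.mk_add]
      exact add_mem (ihx _) (ihy _)
    · intro t x hx ih h
      have : (⟨t • x, h⟩ : A) = t • ⟨x, hspanA hx⟩ := rfl
      rw [this, Submodule.Quotient.mk_smul]
      exact Submodule.smul_mem _ _ (ih _)
  have hfin : Module.Finite K (A ⧸ B) := by
    rw [Module.finite_def, Submodule.fg_def]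
    exact ⟨Set.range w, Set.finite_range w, hspan⟩
  have hub : Module.finrank K (A ⧸ B) ≤ d := by
    have h := finrank_range_le_card (R := K) w
    rw [Set.finrank, hspan, finrank_top] at h
    simpa using h
  have hker : B ≤ LinearMap.ker (f.comp A.subtype) := by
    intro x hx
    rw [LinearMap.mem_ker, LinearMap.comp_apply]
    exact hfb _ (Submodule.mem_comap.mp hx)
  let ρ : (A ⧸ B) →ₗ[K] (Fin d → K) := Submodule.liftQ B (f.comp A.subtype) hker
  have hρw : ∀ j, ρ (w j) = Pi.single j 1 := fun j => by
    show Submodule.liftQ B (f.comp A.subtype) hker (Submodule.Quotient.mk _) = _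
    rw [Submodule.liftQ_apply, LinearMap.comp_apply]
    exact hfv j
  have hsurj : Function.Surjective ρ := by
    intro u
    refine ⟨∑ j, u j • w j, ?_⟩
    rw [map_sum]
    simp_rw [map_smul, hρw]
    funext jj
    simp [Finset.sum_apply, Pi.single_apply]
  have hlb : d ≤ Module.finrank K (A ⧸ B) := by
    haveI := hfin
    have h2 := LinearMap.finrank_range_le ρ
    rw [LinearMap.range_eq_top.mpr hsurj, finrank_top, Module.finrank_fin_fun] at h2
    exact h2
  omega

lemma XSet_eq : Set.range (XG k) = XSet k := by
  ext u
  constructor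
  · rintro ⟨j, rfl⟩
    fin_cases j <;> simp [XSet]
  · intro hu
    simp only [XSet, Set.mem_insert_iff, Set.mem_singleton_iff] at hu
    rcases hu with rfl | rfl | rfl | rfl
    exacts [⟨0, rfl⟩, ⟨1, rfl⟩, ⟨2, rfl⟩, ⟨3, rfl⟩]

lemma dim1 : Module.finrank k ((γG k 0).toSubmodule ⧸
    Submodule.comap (γG k 0).toSubmodule.subtype (γG k 1).toSubmodule) = 4 := by
  refine dim_eq (γG k 0) (γG k 1) 4 (XG k) ?_ ?_ (f1 k) ?_ ?_
  · intro j; rw [γ_zero]; exact LieSubmodule.mem_top _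
  · intro z _
    rw [XSet_eq k]
    exact T1 k z
  · intro x hx
    have h2 := φb_lcs k ((LieSubmodule.mem_toSubmodule _).mp hx)
    obtain ⟨h0, h1, h2', h3⟩ := NModel.lcs1_le_K1 ((LieSubmodule.mem_toSubmodule _).mpr h2)
    funext j
    fin_cases j
    exacts [h0, h1, h2', h3]
  · intro j
    funext jj
    rw [f1_apply, φb_X]
    fin_cases j <;> fin_cases jj <;>
      simp [φgen, NModel.sv, emb4, Pi.single_apply]

def v2 : Fin 2 → GQ k := fun j => if j = 0 then PG k else QG k

lemma dim2 : Module.finrank k ((γG k 1).toSubmodule ⧸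
    Submodule.comap (γG k 1).toSubmodule.subtype (γG k 2).toSubmodule) = 2 := by
  refine dim_eq (γG k 1) (γG k 2) 2 (v2 k) ?_ ?_ (f2 k) ?_ ?_
  · intro j; fin_cases j <;> simp only [v2] <;> norm_num
    · exact mem_γ1 k _ _
    · exact mem_γ1 k _ _
  · refine le_trans (T2 k) (sup_le_sup ?_ le_rfl)
    rw [Submodule.span_le]
    rintro u hu
    simp only [Set.mem_insert_iff, Set.mem_singleton_iff] at hu
    rcases hu with rfl | rfl
    · exact Submodule.subset_span ⟨0, by simp [v2]⟩
    · exact Submodule.subset_span ⟨1, by simp [v2]⟩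
  · intro x hx
    have h2 := φb_lcs k ((LieSubmodule.mem_toSubmodule _).mp hx)
    obtain ⟨h0, h1, h2', h3, h4, h5⟩ := NModel.lcs2_le_K2 ((LieSubmodule.mem_toSubmodule _).mpr h2)
    funext j
    fin_cases j
    exacts [h4, h5]
  · intro j
    funext jj
    rw [f2_apply]
    fin_cases j <;> fin_cases jj <;>
      simp [v2, φb_P, φb_Q, NModel.sv, emb2, Pi.single_apply]

def v5 : Fin 5 → GQ k := fun j =>
  if j = 0 then G1 k else if j = 1 then G2 k else if j = 2 then G3 k
  else if j = 3 then G4 k else G5 k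

lemma dim3 : Module.finrank k ((γG k 2).toSubmodule ⧸
    Submodule.comap (γG k 2).toSubmodule.subtype (γG k 3).toSubmodule) = 5 := by
  refine dim_eq (γG k 2) (γG k 3) 5 (v5 k) ?_ ?_ (f3 k) ?_ ?_
  · intro j
    fin_cases j <;> simp only [v5, Fin.isValue, Fin.reduceEq, ↓reduceIte] <;>
      exact mem_γsucc k _ (mem_γ1 k _ _)
  · refine le_trans (T3 k) (sup_le_sup ?_ le_rfl)
    rw [Submodule.span_le]
    rintro u hu
    simp only [Set.mem_insert_iff, Set.mem_singleton_iff] at hu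
    rcases hu with rfl | rfl | rfl | rfl | rfl
    · exact Submodule.subset_span ⟨0, by simp [v5]⟩
    · exact Submodule.subset_span ⟨1, by simp [v5]⟩
    · exact Submodule.subset_span ⟨2, by simp [v5]⟩
    · exact Submodule.subset_span ⟨3, by simp [v5]⟩
    · exact Submodule.subset_span ⟨4, by simp [v5]⟩
  · intro x hx
    have h2 := φb_lcs k ((LieSubmodule.mem_toSubmodule _).mp hx)
    have h3 : φb k x = 0 := NModel.lcs3_eq_zero h2
    funext jj
    rw [f3_apply, h3]
    rfl
  · intro j
    funext jj
    rw [f3_apply]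
    fin_cases j <;> fin_cases jj <;>
      simp [v5, φb_G1, φb_G2, φb_G3, φb_G4, φb_G5, NModel.sv, emb5, Pi.single_apply]

lemma main : grDim k (GQ k) 1 = 4 ∧ grDim k (GQ k) 2 = 2 ∧ grDim k (GQ k) 3 = 5 :=
  ⟨dim1 k, dim2 k, dim3 k⟩

end
end OrbitTwo

theorem orbit_two_presentation_graded_dimensions
    {k : Type*} [Field k] :
    let L := FreeLieAlgebra k (Fin 4)
    let x : Fin 4 → L := FreeLieAlgebra.of k
    let r : LieIdeal k L := LieSubmodule.lieSpan k L
      {⁅x 0, x 1⁆, ⁅x 0, x 2⁆, ⁅x 1, x 2⁆, ⁅x 1, x 3⁆}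
    grDim k (L ⧸ r) 1 = 4 ∧ grDim k (L ⧸ r) 2 = 2 ∧ grDim k (L ⧸ r) 3 = 5 := by
  intro L x r
  exact OrbitTwo.main k
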